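/- arXiv:math/0103199 — 4 statements merged into one kernel-verified Lean document; each statement's English description precedes it below -/
import Mathlib

section
/- Let $f : X \to Y$ be a Krasinkiewicz map of compact metric spaces, and let $C(f)$ denote the union of all nondegenerate connected components of the fibers of $f$. Then there exist compact subsets $A_1, A_2, \ldots \subseteq X$ such that $C(f) = \bigcup_{i=1}^{\infty} A_i$ and every connected component of each $A_i$ is contained in a single fiber of $f$. -/
/-!
The fiber-components of a map from a compact space form an upper semicontinuous decomposition,
so the points whose fiber-component has diameter at least `1/(n+1)` form a closed set `Sₙ`, and
`C(f) = ⋃ₙ Sₙ`. Cut each `Sₙ` into countably many compact pieces of diameter less than `1/(n+1)`.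
A fiber-component inside such a piece would have diameter both at least and less than `1/(n+1)`,
so by the Krasinkiewicz property every component of a piece lies in a fiber-component.
-/

open Set Metric

/-- A map is Krasinkiewicz if every continuum in `X` either contains a connected
component of a fiber or is contained in a connected component of a fiber. -/
def IsKrasinkiewicz {X Y : Type*} [TopologicalSpace X] [TopologicalSpace Y] (f : X → Y) : Prop :=
  ∀ F : Set X, IsCompact F → IsConnected F →
    (∃ x : X, connectedComponentIn (f ⁻¹' {f x}) x ⊆ F) ∨
    (∃ x : X, F ⊆ connectedComponentIn (f ⁻¹' {f x}) x)

open Topology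

theorem exists_isClopen_mem_subset_of_connectedComponent_subset {Z : Type*}
    [TopologicalSpace Z] [T2Space Z] [CompactSpace Z] {x : Z} {U : Set Z} (hU : IsOpen U)
    (hxU : connectedComponent x ⊆ U) : ∃ V, IsClopen V ∧ x ∈ V ∧ V ⊆ U := by
  let N := {s : Set Z // IsClopen s ∧ x ∈ s}
  have : Nonempty N := ⟨⟨univ, isClopen_univ, mem_univ x⟩⟩
  have hdir : Directed (· ⊇ ·) fun s : N => s.val := by
    rintro ⟨s, hs, hxs⟩ ⟨t, ht, hxt⟩
    exact ⟨⟨s ∩ t, hs.inter ht, hxs, hxt⟩, inter_subset_left, inter_subset_right⟩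
  obtain ⟨⟨V, hV, hxV⟩, hVU⟩ := exists_subset_nhds_of_compactSpace hdir
    (fun s => s.2.1.isClosed) fun y hy =>
      hU.mem_nhds (hxU ((connectedComponent_eq_iInter_isClopen x).symm ▸ hy))
  exact ⟨V, hV, hxV, hVU⟩

theorem IsCompact.exists_disjoint_isOpen_of_connectedComponentIn_subset {X : Type*}
    [TopologicalSpace X] [T2Space X] {K U : Set X} (hK : IsCompact K) {x : X} (hx : x ∈ K)
    (hU : IsOpen U) (hKU : connectedComponentIn K x ⊆ U) :
    ∃ O₁ O₂, IsOpen O₁ ∧ IsOpen O₂ ∧ Disjoint O₁ O₂ ∧ K ⊆ O₁ ∪ O₂ ∧ x ∈ O₁ ∧ O₁ ⊆ U := by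
  have : CompactSpace K := isCompact_iff_compactSpace.mp hK
  rw [connectedComponentIn_eq_image hx, image_subset_iff] at hKU
  obtain ⟨V, hV, hxV, hVU⟩ := exists_isClopen_mem_subset_of_connectedComponent_subset
    (hU.preimage continuous_subtype_val) hKU
  obtain ⟨O₁, O₂, hO₁, hO₂, hVO₁, hVO₂, hO⟩ := SeparatedNhds.of_isCompact_isCompact
    (hV.isClosed.isCompact.image continuous_subtype_val)
    (hV.compl.isClosed.isCompact.image continuous_subtype_val)
    (disjoint_image_of_injective Subtype.val_injective disjoint_compl_right)
  refine ⟨O₁ ∩ U, O₂, hO₁.inter hU, hO₂, hO.mono_left inter_subset_left, fun y hy => ?_,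
    ⟨hVO₁ (mem_image_of_mem _ hxV), hVU hxV⟩, inter_subset_right⟩
  by_cases hyV : (⟨y, hy⟩ : K) ∈ V
  · exact Or.inl ⟨hVO₁ ⟨_, hyV, rfl⟩, hVU hyV⟩
  · exact Or.inr (hVO₂ ⟨_, hyV, rfl⟩)

theorem eventually_connectedComponentIn_fiber_subset {X Y : Type*} [TopologicalSpace X]
    [T2Space X] [CompactSpace X] [TopologicalSpace Y] [T2Space Y] {f : X → Y}
    (hf : Continuous f) {x : X} {U : Set X} (hU : IsOpen U)
    (hxU : connectedComponentIn (f ⁻¹' {f x}) x ⊆ U) :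
    ∀ᶠ x' in 𝓝 x, connectedComponentIn (f ⁻¹' {f x'}) x' ⊆ U := by
  obtain ⟨O₁, O₂, hO₁, hO₂, hO, hfiber, hxO₁, hO₁U⟩ :=
    (isClosed_singleton.preimage hf).isCompact.exists_disjoint_isOpen_of_connectedComponentIn_subset
      rfl hU hxU
  -- `f` is a closed map, so the fibers over a neighbourhood of `f x` still lie in `O₁ ∪ O₂`.
  have hG : IsOpen (f '' (O₁ ∪ O₂)ᶜ)ᶜ :=
    (hf.isClosedMap _ (hO₁.union hO₂).isClosed_compl).isOpen_compl
  have hfx : f x ∉ f '' (O₁ ∪ O₂)ᶜ := fun ⟨z, hz, hzx⟩ => hz (hfiber hzx)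
  filter_upwards [hO₁.mem_nhds hxO₁, hf.continuousAt.preimage_mem_nhds (hG.mem_nhds hfx)]
    with x' hx'O₁ hx'G
  have hfiber' : f ⁻¹' {f x'} ⊆ O₁ ∪ O₂ := fun z hz => by_contra fun hzO => hx'G ⟨z, hzO, hz⟩
  exact (isPreconnected_connectedComponentIn.subset_left_of_subset_union hO₁ hO₂ hO
    ((connectedComponentIn_subset _ _).trans hfiber')
    ⟨x', mem_connectedComponentIn rfl, hx'O₁⟩).trans hO₁U

theorem isClosed_setOf_le_diam_connectedComponentIn_fiber {X Y : Type*} [MetricSpace X]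
    [CompactSpace X] [TopologicalSpace Y] [T2Space Y] {f : X → Y} (hf : Continuous f) (ε : ℝ) :
    IsClosed {x | ε ≤ diam (connectedComponentIn (f ⁻¹' {f x}) x)} := by
  refine isOpen_compl_iff.mp (isOpen_iff_mem_nhds.mpr fun x hx => ?_)
  set K := connectedComponentIn (f ⁻¹' {f x}) x
  have hKε : diam K < ε := not_le.mp hx
  obtain ⟨η, hη, hKη⟩ : ∃ η : ℝ, 0 < η ∧ diam K + 2 * η < ε :=
    ⟨(ε - diam K) / 4, by linarith, by linarith⟩
  filter_upwards [eventually_connectedComponentIn_fiber_subset hf isOpen_thickening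
    (self_subset_thickening hη K)] with x' hx'
  rw [mem_compl_iff, mem_ofPred_eq, not_le]
  calc diam (connectedComponentIn (f ⁻¹' {f x'}) x')
      ≤ diam (thickening η K) := diam_mono hx' isBounded_of_compactSpace
    _ ≤ diam K + 2 * η := diam_thickening_le _ hη.le
    _ < ε := hKη

theorem not_subsingleton_iff_exists_nat_one_div_le_diam {X : Type*} [MetricSpace X]
    {s : Set X} (hs : Bornology.IsBounded s) :
    ¬ s.Subsingleton ↔ ∃ n : ℕ, 1 / ((n : ℝ) + 1) ≤ diam s := by
  constructor
  · intro h
    obtain ⟨n, hn⟩ := exists_nat_one_div_lt (diam_pos (not_subsingleton_iff.mp h) hs)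
    exact ⟨n, hn.le⟩
  · rintro ⟨n, hn⟩ h
    rw [diam_subsingleton h] at hn
    exact (Nat.one_div_pos_of_nat (α := ℝ)).not_ge hn

theorem exists_isCompact_iUnion_eq_iUnion_diam_lt {X : Type*} [MetricSpace X] [CompactSpace X]
    {S : ℕ → Set X} (hS : ∀ n, IsClosed (S n)) {ε : ℕ → ℝ} (hε : ∀ n, 0 < ε n) :
    ∃ A : ℕ → Set X, (∀ i, IsCompact (A i)) ∧ ⋃ i, A i = ⋃ n, S n ∧
      ∀ i, ∃ n, A i ⊆ S n ∧ diam (A i) < ε n := by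
  rcases isEmpty_or_nonempty X with hX | hX
  · exact ⟨fun _ => ∅, fun _ => isCompact_empty, Subsingleton.elim _ _,
      fun _ => ⟨0, empty_subset _, diam_empty.trans_lt (hε 0)⟩⟩
  obtain ⟨u, hu⟩ := TopologicalSpace.exists_dense_seq X
  have hcover : ∀ n, ⋃ k, closedBall (u k) (ε n / 4) = univ := fun n =>
    eq_univ_of_forall fun y =>
      let ⟨k, hk⟩ := hu.exists_dist_lt y (by linarith [hε n])
      mem_iUnion.mpr ⟨k, mem_closedBall.mpr hk.le⟩
  let B : ℕ × ℕ → Set X := fun p => S p.1 ∩ closedBall (u p.2) (ε p.1 / 4)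
  refine ⟨fun i => B i.unpair, fun i => ((hS _).inter isClosed_closedBall).isCompact, ?_,
    fun i => ⟨i.unpair.1, inter_subset_left, ?_⟩⟩
  · rw [Nat.surjective_unpair.iUnion_comp B, iUnion_prod']
    simp only [B, ← inter_iUnion, hcover, inter_univ]
  · calc diam (B i.unpair) ≤ 2 * (ε i.unpair.1 / 4) :=
          (diam_mono inter_subset_right isBounded_closedBall).trans
            (diam_closedBall (by linarith [hε i.unpair.1]))
      _ < ε i.unpair.1 := by linarith [hε i.unpair.1]

theorem IsCompact.connectedComponentIn {X : Type*} [TopologicalSpace X] {A : Set X}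
    (hA : IsCompact A) {x : X} (hx : x ∈ A) : IsCompact (connectedComponentIn A x) := by
  have : CompactSpace A := isCompact_iff_compactSpace.mp hA
  rw [connectedComponentIn_eq_image hx]
  exact isClosed_connectedComponent.isCompact.image continuous_subtype_val

theorem IsKrasinkiewicz.exists_connectedComponentIn_subset_fiber {X Y : Type*}
    [TopologicalSpace X] [TopologicalSpace Y] {f : X → Y} (hf : IsKrasinkiewicz f) {A : Set X}
    (hA : IsCompact A) (hfiber : ∀ x, ¬ connectedComponentIn (f ⁻¹' {f x}) x ⊆ A) {x : X}
    (hx : x ∈ A) : ∃ y, connectedComponentIn A x ⊆ f ⁻¹' {y} := by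
  rcases hf _ (hA.connectedComponentIn hx) (isConnected_connectedComponentIn_iff.mpr hx) with
    ⟨x', hx'⟩ | ⟨x', hx'⟩
  · exact absurd (hx'.trans (connectedComponentIn_subset _ _)) (hfiber x')
  · exact ⟨f x', hx'.trans (connectedComponentIn_subset _ _)⟩

theorem krasinkiewicz_union_decomposition_general {X Y : Type*} [MetricSpace X] [CompactSpace X]
    [MetricSpace Y] (f : C(X, Y)) (hf : IsKrasinkiewicz ⇑f) :
    ∃ A : ℕ → Set X, (∀ i, IsCompact (A i)) ∧
      {x : X | ¬ (connectedComponentIn (⇑f ⁻¹' {f x}) x).Subsingleton} = ⋃ i, A i ∧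
      ∀ i, ∀ x ∈ A i, ∃ y : Y, connectedComponentIn (A i) x ⊆ ⇑f ⁻¹' {y} := by
  obtain ⟨A, hA, hAS, hAsmall⟩ := exists_isCompact_iUnion_eq_iUnion_diam_lt
    (fun n => isClosed_setOf_le_diam_connectedComponentIn_fiber f.continuous (1 / ((n : ℝ) + 1)))
    (fun n => Nat.one_div_pos_of_nat)
  refine ⟨A, hA, ?_, fun i x hx => hf.exists_connectedComponentIn_subset_fiber (hA i) ?_ hx⟩
  · rw [hAS]
    ext x
    simpa only [mem_ofPred_eq, mem_iUnion] using
      not_subsingleton_iff_exists_nat_one_div_le_diam isBounded_of_compactSpace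
  · intro x' hx'
    obtain ⟨n, hAn, hAdiam⟩ := hAsmall i
    have hlarge := hAn (hx' (mem_connectedComponentIn rfl))
    exact ((diam_mono hx' isBounded_of_compactSpace).trans_lt hAdiam).not_ge hlarge

theorem krasinkiewicz_union_decomposition {X Y : Type*} [MetricSpace X] [CompactSpace X]
    [MetricSpace Y] [CompactSpace Y] (f : C(X, Y)) (hf : IsKrasinkiewicz ⇑f) :
    ∃ A : ℕ → Set X, (∀ i, IsCompact (A i)) ∧
      {x : X | ¬ (connectedComponentIn (⇑f ⁻¹' {f x}) x).Subsingleton} = ⋃ i, A i ∧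
      ∀ i, ∀ x ∈ A i, ∃ y : Y, connectedComponentIn (A i) x ⊆ ⇑f ⁻¹' {y} :=
  krasinkiewicz_union_decomposition_general f hf
end

section
/- Let $X$ be a compact metric space and let $\psi : X \to [0,1]$ be a continuous map satisfying: for every continuum $F \subseteq X$ with $\psi(F)$ not a singleton, there is a dense subset $D \subseteq \psi(F)$ such that for every $d \in D$, the set $\psi^{-1}(d) \cap F$ is a union of components of $\psi^{-1}(d)$. Then $\psi$ is a Krasinkiewicz map, i.e., every continuum in $X$ either contains a component of a fiber of $\psi$ or is contained in a component of a fiber of $\psi$. -/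
open Set Metric

theorem subset_connectedComponentIn_fiber_of_image_subsingleton {X Y : Type*} [TopologicalSpace X]
    {f : X → Y} {F : Set X} {x : X} (hF : IsPreconnected F) (hx : x ∈ F)
    (hconst : (f '' F).Subsingleton) : F ⊆ connectedComponentIn (f ⁻¹' {f x}) x :=
  hF.subset_connectedComponentIn hx fun _ hy =>
    hconst (mem_image_of_mem f hy) (mem_image_of_mem f hx)

theorem starCond_implies_krasinkiewicz_general {X : Type*} [MetricSpace X]
    (ψ : C(X, unitInterval))
    (hψ : ∀ F : Set X, IsCompact F → IsConnected F → ¬ (⇑ψ '' F).Subsingleton →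
      ∃ D ⊆ ⇑ψ '' F, ⇑ψ '' F ⊆ closure D ∧
        ∀ d ∈ D, ∀ x ∈ ⇑ψ ⁻¹' {d} ∩ F, connectedComponentIn (⇑ψ ⁻¹' {d}) x ⊆ F) :
    IsKrasinkiewicz ⇑ψ := by
  intro F hFc hFconn
  obtain ⟨x₀, hx₀⟩ := hFconn.nonempty
  by_cases hconst : (⇑ψ '' F).Subsingleton
  · exact .inr ⟨x₀, subset_connectedComponentIn_fiber_of_image_subsingleton
      hFconn.isPreconnected hx₀ hconst⟩
  obtain ⟨D, hDF, hdense, hcomp⟩ := hψ F hFc hFconn hconst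
  obtain ⟨d, hd⟩ : D.Nonempty := (Nonempty.mono hdense ⟨_, mem_image_of_mem ψ hx₀⟩).of_closure
  obtain ⟨x, hxF, rfl⟩ := hDF hd
  exact .inl ⟨x, hcomp _ hd x ⟨rfl, hxF⟩⟩

theorem starCond_implies_krasinkiewicz {X : Type*} [MetricSpace X] [CompactSpace X]
    (ψ : C(X, unitInterval))
    (hψ : ∀ F : Set X, IsCompact F → IsConnected F → ¬ (⇑ψ '' F).Subsingleton →
      ∃ D ⊆ ⇑ψ '' F, ⇑ψ '' F ⊆ closure D ∧
        ∀ d ∈ D, ∀ x ∈ ⇑ψ ⁻¹' {d} ∩ F, connectedComponentIn (⇑ψ ⁻¹' {d}) x ⊆ F) :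
    IsKrasinkiewicz ⇑ψ :=
  starCond_implies_krasinkiewicz_general ψ hψ
end

section
/- Let $f : X \to Y$ be a continuous surjection of compact metric spaces with all fibers zero-dimensional (a light map at the level of fibers), where $X$ and $Y$ are finite dimensional. Fix $\delta > 0$ and $k = \dim Y$. Then the set $\mathcal{G}$ of continuous maps $g : X \to [0,1]$ with the property that every fiber of $(f,g) : X \to Y \times [0,1]$ contains at most $k+1$ points having pairwise distances at least $\delta$ is an open subset of $C(X,[0,1])$ with the sup metric. -/
/-! The complement of the set is the projection to `C(X, [0,1])` of the closed set of pairs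
`(g, x)` where `x` is a `δ`-separated `(k+2)`-tuple in one fiber of `f` on which `g` is
constant. Since `X^(k+2)` is compact, this projection is a closed map. -/

open Set Metric

def CovDimLE (X : Type*) [TopologicalSpace X] (n : ℕ) : Prop :=
  ∀ (ι : Type) (U : ι → Set X), (∀ i, IsOpen (U i)) → (⋃ i, U i) = Set.univ →
    ∃ (κ : Type) (V : κ → Set X),
      (∀ j, IsOpen (V j)) ∧ (⋃ j, V j) = Set.univ ∧ (∀ j, ∃ i, V j ⊆ U i) ∧
      ∀ x : X, {j | x ∈ V j}.Finite ∧ {j | x ∈ V j}.ncard ≤ n + 1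

section

variable {X Y Z : Type*}

def separatedFiberTuples [PseudoMetricSpace X] (f : X → Y) (δ : ℝ) (n : ℕ) : Set (Fin n → X) :=
  {x | (∀ i j, i ≠ j → δ ≤ dist (x i) (x j)) ∧ ∀ i j, f (x i) = f (x j)}

theorem isClosed_separatedFiberTuples [PseudoMetricSpace X] [TopologicalSpace Y] [T2Space Y]
    {f : X → Y} (hf : Continuous f) (δ : ℝ) (n : ℕ) : IsClosed (separatedFiberTuples f δ n) := by
  simp only [separatedFiberTuples, ofPred_and, ofPred_forall]
  refine .inter (isClosed_iInter fun i => isClosed_iInter fun j => isClosed_iInter fun _ => ?_)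
    (isClosed_iInter fun i => isClosed_iInter fun j => isClosed_eq (by fun_prop) (by fun_prop))
  exact isClosed_le continuous_const (by fun_prop)

theorem isClosed_setOf_exists_mem_apply_eq [TopologicalSpace X] [CompactSpace X]
    [LocallyCompactSpace X] [TopologicalSpace Z] [T2Space Z] {n : ℕ} {T : Set (Fin n → X)}
    (hT : IsClosed T) :
    IsClosed {g : C(X, Z) | ∃ x ∈ T, ∀ i j, g (x i) = g (x j)} := by
  have hs : IsClosed {p : C(X, Z) × (Fin n → X) | p.2 ∈ T ∧ ∀ i j, p.1 (p.2 i) = p.1 (p.2 j)} := by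
    simp only [ofPred_and, ofPred_forall]
    exact (hT.preimage continuous_snd).inter <|
      isClosed_iInter fun i => isClosed_iInter fun j => isClosed_eq (by fun_prop) (by fun_prop)
  convert isClosedMap_fst_of_compactSpace _ hs using 1
  ext g
  simp

theorem Finset.exists_injective_fin_of_le_card {S : Finset X} {n : ℕ} (h : n ≤ S.card) :
    ∃ x : Fin n → X, Function.Injective x ∧ ∀ i, x i ∈ S := by
  obtain ⟨e⟩ := Function.Embedding.nonempty_of_card_le (α := Fin n) (β := S) (by simpa)
  exact ⟨fun i => e i, Subtype.val_injective.comp e.injective, fun i => (e i).2⟩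

theorem forall_separated_finset_card_le_iff [PseudoMetricSpace X] {f : X → Y} {g : X → Z}
    {δ : ℝ} (hδ : 0 < δ) (n : ℕ) :
    (∀ (y : Y) (t : Z) (S : Finset X), (↑S : Set X) ⊆ {x | f x = y ∧ g x = t} →
        (∀ x ∈ S, ∀ x' ∈ S, x ≠ x' → δ ≤ dist x x') → S.card ≤ n) ↔
      ¬ ∃ x ∈ separatedFiberTuples f δ (n + 1), ∀ i j, g (x i) = g (x j) := by
  classical
  constructor
  · rintro hcard ⟨x, ⟨hsep, hfib⟩, hconst⟩
    have hinj : Function.Injective x := fun i j hij => by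
      by_contra hne
      have := hsep i j hne
      rw [hij, dist_self] at this
      linarith
    have := hcard (f (x 0)) (g (x 0)) (Finset.univ.image x)
      (by simp [range_subset_iff, hfib _ 0, hconst _ 0])
      (by simp only [Finset.mem_image, Finset.mem_univ, true_and]
          rintro _ ⟨i, rfl⟩ _ ⟨j, rfl⟩ hne
          exact hsep i j (ne_of_apply_ne x hne))
    rw [Finset.card_image_of_injective _ hinj, Finset.card_univ, Fintype.card_fin] at this
    omega
  · intro hnone y t S hS hsep
    by_contra! hlt
    obtain ⟨x, hinj, hxS⟩ := S.exists_injective_fin_of_le_card hlt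
    refine hnone ⟨x, ⟨fun i j hij => hsep _ (hxS i) _ (hxS j) (hinj.ne hij), fun i j => ?_⟩,
      fun i j => ?_⟩
    · rw [(hS (hxS i)).1, (hS (hxS j)).1]
    · rw [(hS (hxS i)).2, (hS (hxS j)).2]

end

theorem open_set_of_bounded_fibers_general {X Y : Type*} [MetricSpace X] [CompactSpace X]
    [MetricSpace Y] (f : C(X, Y)) (k : ℕ) (δ : ℝ) (hδ : 0 < δ) :
    IsOpen {g : C(X, unitInterval) |
      ∀ (y : Y) (t : unitInterval) (S : Finset X),
        (↑S : Set X) ⊆ {x : X | f x = y ∧ g x = t} →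
        (∀ x ∈ S, ∀ x' ∈ S, x ≠ x' → δ ≤ dist x x') → S.card ≤ k + 1} := by
  have hT := isClosed_separatedFiberTuples f.continuous δ (k + 2)
  convert (isClosed_setOf_exists_mem_apply_eq (Z := unitInterval) hT).isOpen_compl using 1
  ext g
  exact forall_separated_finset_card_le_iff hδ (k + 1)

theorem open_set_of_bounded_fibers {X Y : Type*} [MetricSpace X] [CompactSpace X]
    [MetricSpace Y] [CompactSpace Y] (f : C(X, Y)) (hsurj : Function.Surjective ⇑f)
    (hlight : ∀ y : Y, CovDimLE ↥(⇑f ⁻¹' {y}) 0)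
    (m : ℕ) (hX : CovDimLE X m) (k : ℕ) (hY : CovDimLE Y k) (δ : ℝ) (hδ : 0 < δ) :
    IsOpen {g : C(X, unitInterval) |
      ∀ (y : Y) (t : unitInterval) (S : Finset X),
        (↑S : Set X) ⊆ {x : X | f x = y ∧ g x = t} →
        (∀ x ∈ S, ∀ x' ∈ S, x ≠ x' → δ ≤ dist x x') → S.card ≤ k + 1} :=
  open_set_of_bounded_fibers_general f k δ hδ
end

section
/- Let $f : X \to Y$ be a continuous surjection of compact metric spaces such that every fiber of $f$ is zero-dimensional (totally disconnected). If $Y$ has covering dimension zero, then $X$ has covering dimension zero. -/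
open Set Metric

/-!
For compact Hausdorff spaces, covering dimension zero is total disconnectedness: an open cover of
order one is a partition into clopen sets, and conversely a compact totally disconnected space
has a clopen basis, so every open cover is refined by a finite clopen partition. It therefore
suffices to show that `X` is totally disconnected. A preconnected set in `X` has preconnected,
hence subsingleton, image in `Y`, so it lies in a single fibre of `f`, where it is a subsingleton.
-/

open Function

lemma Set.finite_and_ncard_le_one_iff_subsingleton {α : Type*} {s : Set α} :
    s.Finite ∧ s.ncard ≤ 1 ↔ s.Subsingleton :=
  ⟨fun ⟨hs, h⟩ _ ha _ hb => (ncard_le_one_iff hs).1 h ha hb,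
    fun h => ⟨h.finite, (ncard_le_one h.finite).2 fun _ ha _ hb => h ha hb⟩⟩

theorem covDimLE_zero_iff {X : Type*} [TopologicalSpace X] :
    CovDimLE X 0 ↔
      ∀ (ι : Type) (U : ι → Set X), (∀ i, IsOpen (U i)) → ⋃ i, U i = univ →
      ∃ (κ : Type) (V : κ → Set X), (∀ j, IsOpen (V j)) ∧ ⋃ j, V j = univ ∧
        (∀ j, ∃ i, V j ⊆ U i) ∧ Pairwise (Disjoint on V) := by
  simp only [CovDimLE, zero_add, finite_and_ncard_le_one_iff_subsingleton,
    subsingleton_setOfPred_mem_iff_pairwise_disjoint]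

lemma isClopen_of_pairwise_disjoint_of_iUnion_eq_univ {X κ : Type*} [TopologicalSpace X]
    {V : κ → Set X} (hV : ∀ j, IsOpen (V j)) (hcov : ⋃ j, V j = univ)
    (hdisj : Pairwise (Disjoint on V)) (j : κ) : IsClopen (V j) := by
  refine ⟨⟨?_⟩, hV j⟩
  have hcompl : (V j)ᶜ = ⋃ (k) (_ : k ≠ j), V k := by
    ext x
    obtain ⟨k, hk⟩ := mem_iUnion.1 (hcov ▸ mem_univ x)
    simp only [mem_compl_iff, mem_iUnion, exists_prop]
    refine ⟨fun hx => ⟨k, fun h => hx (h ▸ hk), hk⟩, ?_⟩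
    rintro ⟨l, hlj, hl⟩ hx
    exact disjoint_left.1 (hdisj hlj) hl hx
  rw [hcompl]
  exact isOpen_biUnion fun k _ => hV k

theorem totallySeparatedSpace_of_covDimLE_zero {X : Type*} [TopologicalSpace X] [T1Space X]
    (h : CovDimLE X 0) : TotallySeparatedSpace X := by
  refine ⟨fun x _ y _ hxy => ?_⟩
  obtain ⟨κ, V, hV, hcov, hrefine, hdisj⟩ := covDimLE_zero_iff.1 h Bool
    (fun b => if b then {y}ᶜ else {x}ᶜ) (fun b => by cases b <;> exact isOpen_compl_singleton)
    (by
      refine eq_univ_of_forall fun z => mem_iUnion.2 ?_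
      by_cases hz : z = x
      · exact ⟨true, by simp [hz, hxy]⟩
      · exact ⟨false, by simp [hz]⟩)
  obtain ⟨j, hxj⟩ := mem_iUnion.1 (hcov ▸ mem_univ x)
  have hyj : y ∉ V j := by
    obtain ⟨b, hb⟩ := hrefine j
    cases b with
    | false => exact absurd (hb hxj) (by simp)
    | true => exact fun hy => absurd (hb hy) (by simp)
  have hclopen := isClopen_of_pairwise_disjoint_of_iUnion_eq_univ hV hcov hdisj j
  exact ⟨V j, (V j)ᶜ, hclopen.isOpen, hclopen.compl.isOpen, hxj, hyj,
    (union_compl_self _).ge, disjoint_compl_right⟩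

theorem exists_clopen_partition_refining {X ι : Type*} [TopologicalSpace X] [CompactSpace X]
    [T2Space X] [TotallyDisconnectedSpace X] {U : ι → Set X} (hU : ∀ i, IsOpen (U i))
    (hcov : ⋃ i, U i = univ) :
    ∃ (n : ℕ) (V : Fin n → Set X), (∀ k, IsClopen (V k)) ∧ ⋃ k, V k = univ ∧
      (∀ k, ∃ i, V k ⊆ U i) ∧ Pairwise (Disjoint on V) := by
  choose i hi using fun x => mem_iUnion.1 (hcov ▸ mem_univ x)
  choose C hC hxC hCU using fun x => compact_exists_isClopen_in_isOpen (hU (i x)) (hi x)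
  obtain ⟨s, hs⟩ := isCompact_univ.elim_finite_subcover C (fun x => (hC x).isOpen)
    fun x _ => mem_iUnion.2 ⟨x, hxC x⟩
  let e := s.equivFin.symm
  obtain ⟨V, hVclopen, -, hVC, hVcov, hdisj⟩ := exists_clopen_partition_of_clopen_cover
    (Z := fun _ => ∅) (D := fun k => C (e k)) (fun _ => isClosed_empty) (fun k => hC _)
    (fun _ => empty_subset _) (fun _ _ _ _ _ => disjoint_bot_left)
  refine ⟨s.card, V, hVclopen, eq_univ_of_univ_subset fun x _ => hVcov ?_,
    fun k => ⟨i (e k), (hVC k).trans (hCU _)⟩, pairwise_univ.1 hdisj⟩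
  obtain ⟨y, hy, hxy⟩ := mem_iUnion₂.1 (hs (mem_univ x))
  exact mem_iUnion.2 ⟨s.equivFin ⟨y, hy⟩, by simpa [e] using hxy⟩

theorem covDimLE_zero_of_totallyDisconnectedSpace {X : Type*} [TopologicalSpace X]
    [CompactSpace X] [T2Space X] [TotallyDisconnectedSpace X] : CovDimLE X 0 := by
  refine covDimLE_zero_iff.2 fun ι U hU hcov => ?_
  obtain ⟨n, V, hV, hVcov, hrefine, hdisj⟩ := exists_clopen_partition_refining hU hcov
  exact ⟨Fin n, V, fun k => (hV k).isOpen, hVcov, hrefine, hdisj⟩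

theorem Continuous.totallyDisconnectedSpace_of_isTotallyDisconnected_fiber {X Y : Type*}
    [TopologicalSpace X] [TopologicalSpace Y] [TotallyDisconnectedSpace Y] {f : X → Y}
    (hf : Continuous f) (hfib : ∀ y, IsTotallyDisconnected (f ⁻¹' {y})) :
    TotallyDisconnectedSpace X := by
  refine ⟨fun t _ ht => ?_⟩
  rcases t.eq_empty_or_nonempty with rfl | ⟨x, hx⟩
  · exact subsingleton_empty
  have himage : (f '' t).Subsingleton :=
    isTotallyDisconnected_of_totallyDisconnectedSpace _ _ (subset_univ _)
      (ht.image f hf.continuousOn)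
  exact hfib (f x) t (fun z hz => himage (mem_image_of_mem f hz) (mem_image_of_mem f hx)) ht

theorem light_map_zero_dim_general {X Y : Type*} [MetricSpace X] [CompactSpace X]
    [MetricSpace Y] (f : C(X, Y))
    (hfib : ∀ y : Y, CovDimLE ↥(⇑f ⁻¹' {y}) 0) (hY : CovDimLE Y 0) :
    CovDimLE X 0 := by
  have := totallySeparatedSpace_of_covDimLE_zero hY
  have : TotallyDisconnectedSpace X :=
    f.continuous.totallyDisconnectedSpace_of_isTotallyDisconnected_fiber fun y =>
      have := totallySeparatedSpace_of_covDimLE_zero (hfib y)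
      totallyDisconnectedSpace_subtype_iff.1 inferInstance
  exact covDimLE_zero_of_totallyDisconnectedSpace

theorem light_map_zero_dim {X Y : Type*} [MetricSpace X] [CompactSpace X]
    [MetricSpace Y] [CompactSpace Y] (f : C(X, Y)) (hsurj : Function.Surjective ⇑f)
    (hfib : ∀ y : Y, CovDimLE ↥(⇑f ⁻¹' {y}) 0) (hY : CovDimLE Y 0) :
    CovDimLE X 0 :=
  light_map_zero_dim_general f hfib hY
end
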